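/- Let n be a positive integer, let G = D_n be the dihedral group of order 2n, and let H ≤ G be a subgroup that does not contain any Klein four-subgroup of G (i.e. no subgroup of H is isomorphic to ℤ/2ℤ × ℤ/2ℤ). Then the restriction map Res : H^3(G, ℤ) → H^3(H, ℤ) is the zero map, where ℤ is a trivial module. -/

import Mathlib

open CategoryTheory groupCohomology

noncomputable section

/-- The map on inhomogeneous cochains (with trivial coefficients `M`) induced by
precomposition with a group homomorphism `f : H →* G`. -/
def trivialCochainsMap (k : Type) [CommRing k] {G H : Type} [Group G] [Group H] (f : H →* G)
    (M : Type) [AddCommGroup M] [Module k M] :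
    inhomogeneousCochains (Rep.trivial k G M) ⟶ inhomogeneousCochains (Rep.trivial k H M) where
  f n := ModuleCat.ofHom ⟨⟨fun φ g => φ (fun i => f (g i)), fun _ _ => rfl⟩, fun _ _ => rfl⟩
  comm' := by
    rintro i j (rfl : i + 1 = j)
    ext φ g
    simp [inhomogeneousCochains.d_hom_apply, CochainComplex.of.d]
    congr 1
    funext j
    congr 2
    funext l
    rcases lt_trichotomy (l : ℕ) (j : ℕ) with h | h | h
    · simp [Fin.contractNth_apply_of_lt, h]
    · simp [Fin.contractNth_apply_of_eq, h, map_mul]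
    · simp [Fin.contractNth_apply_of_gt, h]

/-- The map `Hⁿ(G, M) → Hⁿ(H, M)` (trivial coefficients `M`) induced by a group homomorphism
`f : H →* G`; for `f` the inclusion of a subgroup this is the restriction map `Res`, and for
`f` a quotient map it is inflation. -/
def trivialCohMap (k : Type) [CommRing k] {G H : Type} [Group G] [Group H] (f : H →* G)
    (M : Type) [AddCommGroup M] [Module k M] (n : ℕ) :
    groupCohomology (Rep.trivial k G M) n ⟶ groupCohomology (Rep.trivial k H M) n :=
  HomologicalComplex.homologyMap (trivialCochainsMap k f M) n

end

/-!
A subgroup `H` of `Dₙ` without Klein four-subgroups is either cyclic or of the form `K ⋊ ⟨s⟩`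
with `K` cyclic of odd order and `s` an involution inverting `K`. For such a group every central
extension with divisible kernel splits: a generator of `K` lifts to an element of the same order,
a central twist of odd order makes the lift of `K` inverted by a lift of `s` of order two, and
the two lifts glue to a section. Hence every `ℝ/ℤ`-valued 2-cocycle is a coboundary.

Averaging over the finite group writes an integral 3-cocycle `f` as the coboundary of a real
2-cochain `v`. Reduced mod `ℤ`, `v` is a 2-cocycle, hence a coboundary `d₁ u`; lifting `u` to `ℝ`
turns `v - d₁ u` into an integral cochain with coboundary `f`. So `H³(H, ℤ) = 0`, and the
restriction map lands in the zero group.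
-/

structure IsDivisibleCentralExtension {E G : Type*} [Group E] [Group G] (π : E →* G) : Prop where
  surjective : Function.Surjective π
  ker_le_center : π.ker ≤ Subgroup.center E
  exists_pow_eq : ∀ z ∈ π.ker, ∀ k : ℕ, k ≠ 0 → ∃ y ∈ π.ker, y ^ k = z

section Lifting

variable {E G : Type*} [Group E] [Group G] {π : E →* G}

theorem IsDivisibleCentralExtension.exists_lift_pow_eq_one (hπ : IsDivisibleCentralExtension π)
    {x : G} {k : ℕ} (hk : k ≠ 0) (hx : x ^ k = 1) : ∃ e, π e = x ∧ e ^ k = 1 := by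
  obtain ⟨e₀, rfl⟩ := hπ.surjective x
  obtain ⟨y, hy, hyk⟩ := hπ.exists_pow_eq (e₀ ^ k) (by simpa using hx) k hk
  have hcomm : Commute e₀ y⁻¹ :=
    Subgroup.mem_center_iff.mp (hπ.ker_le_center (inv_mem hy)) e₀
  refine ⟨e₀ * y⁻¹, by simpa using hy, ?_⟩
  rw [hcomm.mul_pow, inv_pow, hyk, mul_inv_cancel]

theorem exists_monoidHom_zmod_apply_one {M : Type*} [Group M] {n : ℕ} {e : M} (he : e ^ n = 1) :
    ∃ f : Multiplicative (ZMod n) →* M, f (Multiplicative.ofAdd 1) = e := by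
  let φ : ZMod n →+ Additive M :=
    ZMod.lift n ⟨zmultiplesHom _ (Additive.ofMul e), by simp [← ofMul_pow, he]⟩
  refine ⟨AddMonoidHom.toMultiplicativeLeft φ, ?_⟩
  have : φ ((1 : ℤ) : ZMod n) = Additive.ofMul e := by rw [ZMod.lift_coe]; simp
  simpa using congrArg Additive.toMul this

theorem exists_monoidHom_lift_of_isCyclic {C : Type*} [Group C] [Finite C] [IsCyclic C]
    (j : C →* G) (hlift : ∀ x : G, x ^ Nat.card C = 1 → ∃ e, π e = x ∧ e ^ Nat.card C = 1) :
    ∃ ψ : C →* E, π.comp ψ = j := by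
  obtain ⟨g, hg⟩ := IsCyclic.exists_generator (α := C)
  obtain ⟨e, he, hem⟩ := hlift (j g) (by rw [← map_pow, pow_card_eq_one', map_one])
  obtain ⟨f, hf⟩ := exists_monoidHom_zmod_apply_one hem
  refine ⟨f.comp (zmodMulEquivOfGenerator hg rfl).symm.toMonoidHom, ?_⟩
  refine MonoidHom.eq_of_eqOn_dense (s := {g}) ?_ ?_
  · rw [← Subgroup.zpowers_eq_closure, Subgroup.eq_top_iff']
    exact hg
  · rintro _ rfl
    simp [hf, he]

/-- Since `e` inverts `π ∘ ψ₀`, the defect `δ c = e (ψ₀ c) e⁻¹ (ψ₀ c)` is a central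
homomorphism of odd order `2t + 1`, and twisting `ψ₀` by `δ ^ t` removes it. -/
theorem exists_lift_conj_eq_inv (hπ : π.ker ≤ Subgroup.center E)
    {C : Type*} [Group C] [IsMulCommutative C] (hodd : Odd (Nat.card C)) {j : C →* G}
    {ψ₀ : C →* E} (hψ₀ : π.comp ψ₀ = j) {e : E} (he : ∀ c, π e * j c * (π e)⁻¹ = (j c)⁻¹) :
    ∃ ψ : C →* E, π.comp ψ = j ∧ ∀ c, e * ψ c * e⁻¹ = (ψ c)⁻¹ := by
  have hπψ₀ (c : C) : π (ψ₀ c) = j c := DFunLike.congr_fun hψ₀ c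
  let δ (c : C) : E := e * ψ₀ c * e⁻¹ * ψ₀ c
  have hδ_ker (c : C) : π (δ c) = 1 := by simp [δ, hπψ₀, he]
  have hδ_comm (c : C) (t : ℕ) (x : E) : Commute (δ c ^ t) x :=
    (Subgroup.mem_center_iff.mp (pow_mem (hπ (hδ_ker c)) t) x).symm
  let δhom : C →* E := MonoidHom.mk' δ fun a b => by
    have hψ : ψ₀ (a * b) = ψ₀ b * ψ₀ a := by
      rw [(IsMulCommutative.is_comm (M := C)).comm a b, map_mul]
    calc δ (a * b) = e * ψ₀ a * e⁻¹ * δ b * ψ₀ a := by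
          change e * ψ₀ (a * b) * e⁻¹ * ψ₀ (a * b) = _
          nth_rewrite 2 [hψ]
          simp only [δ, map_mul]
          group
      _ = δ b * δ a := by rw [← pow_one (δ b), ← (hδ_comm b 1 _).eq, mul_assoc]
      _ = δ a * δ b := by simpa using (hδ_comm b 1 (δ a)).eq
  obtain ⟨t, ht⟩ := hodd
  have hδ_pow (c : C) : δ c ^ t * δ c = (δ c ^ t)⁻¹ := by
    refine eq_inv_of_mul_eq_one_left ?_
    calc δ c ^ t * δ c * δ c ^ t = δhom (c ^ Nat.card C) := by
          rw [map_pow, ht, ← pow_succ, ← pow_add]; ring_nf; rfl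
      _ = 1 := by rw [pow_card_eq_one', map_one]
  refine ⟨MonoidHom.mk' (fun c => δ c ^ t * ψ₀ c) fun a b => ?_, ?_, fun c => ?_⟩
  · rw [show δ (a * b) = δ a * δ b from map_mul δhom a b,
      (Commute.mul_pow (by simpa using hδ_comm a 1 (δ b)) t), map_mul, mul_assoc,
      (hδ_comm b t (ψ₀ a)).left_comm, ← mul_assoc]
  · ext c
    simp [hδ_ker, hπψ₀]
  · calc e * (δ c ^ t * ψ₀ c) * e⁻¹ = δ c ^ t * (e * ψ₀ c * e⁻¹) := by
          rw [← mul_assoc, ← (hδ_comm c t e).eq]; group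
      _ = δ c ^ t * δ c * (ψ₀ c)⁻¹ := by simp only [δ]; group
      _ = (δ c ^ t * ψ₀ c)⁻¹ := by rw [hδ_pow, mul_inv_rev, (hδ_comm c t (ψ₀ c)).inv_inv.eq]

end Lifting

structure DihedralDecomposition (G : Type*) [Group G] where
  K : Subgroup G
  s : G
  s_mul_self : s * s = 1
  s_notMem : s ∉ K
  conj_eq_inv : ∀ k ∈ K, s * k * s⁻¹ = k⁻¹
  mem_or_mul_mem : ∀ g, g ∈ K ∨ g * s ∈ K

namespace DihedralDecomposition

variable {G E : Type*} [Group G] [Group E] (D : DihedralDecomposition G)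

theorem mul_s_mem {g : G} (hg : g ∉ D.K) : g * D.s ∈ D.K := (D.mem_or_mul_mem g).resolve_left hg

theorem mul_s_eq {k : G} (hk : k ∈ D.K) : k * D.s = D.s * k⁻¹ := by
  have := D.conj_eq_inv k⁻¹ (inv_mem hk)
  rw [inv_inv] at this
  calc k * D.s = D.s * k⁻¹ * D.s⁻¹ * D.s := by rw [this]
    _ = D.s * k⁻¹ := by group

theorem mul_eq_of_notMem (g : G) {h : G} (hh : h ∉ D.K) : g * h = g * D.s * (h * D.s)⁻¹ := by
  calc g * h = g * (D.s * D.s) * h := by rw [D.s_mul_self, mul_one]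
    _ = g * D.s * (h * D.s)⁻¹ := by rw [← D.conj_eq_inv _ (D.mul_s_mem hh)]; group

open Classical in
theorem exists_monoidHom_extend (ψ : D.K →* E) {e : E} (he : e * e = 1)
    (hψ : ∀ k, e * ψ k * e⁻¹ = (ψ k)⁻¹) :
    ∃ Φ : G →* E, (∀ k : D.K, Φ k = ψ k) ∧ Φ D.s = e := by
  let ψ' (g : G) : E := if hg : g ∈ D.K then ψ ⟨g, hg⟩ else 1
  have hψ' {a : G} (ha : a ∈ D.K) : ψ' a = ψ ⟨a, ha⟩ := dif_pos ha
  have hψ'_mul {a b : G} (ha : a ∈ D.K) (hb : b ∈ D.K) : ψ' (a * b) = ψ' a * ψ' b := by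
    rw [hψ' ha, hψ' hb, hψ' (mul_mem ha hb), ← map_mul]; rfl
  have hψ'_inv {a : G} (ha : a ∈ D.K) : ψ' a⁻¹ = (ψ' a)⁻¹ := by
    rw [hψ' ha, hψ' (inv_mem ha), ← map_inv]; rfl
  have hswap {a : G} (ha : a ∈ D.K) : e * ψ' a = (ψ' a)⁻¹ * e := by
    rw [hψ' ha, ← hψ ⟨a, ha⟩]; group
  let Φ (g : G) : E := if g ∈ D.K then ψ' g else ψ' (g * D.s) * e
  have Φ_mul (g h : G) : Φ (g * h) = Φ g * Φ h := by
    by_cases hg : g ∈ D.K <;> by_cases hh : h ∈ D.K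
    · simp only [Φ, if_pos hg, if_pos hh, if_pos (mul_mem hg hh), hψ'_mul hg hh]
    · have hgh : g * h ∉ D.K := fun h' => hh ((D.K.mul_mem_cancel_left hg).mp h')
      simp only [Φ, if_pos hg, if_neg hh, if_neg hgh, mul_assoc g h,
        hψ'_mul hg (D.mul_s_mem hh), mul_assoc]
    · have hgh : g * h ∉ D.K := fun h' => hg ((D.K.mul_mem_cancel_right hh).mp h')
      simp only [Φ, if_neg hg, if_pos hh, if_neg hgh]
      rw [mul_assoc g, D.mul_s_eq hh, ← mul_assoc, hψ'_mul (D.mul_s_mem hg) (inv_mem hh),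
        hψ'_inv hh, mul_assoc, ← hswap hh, mul_assoc]
    · have hgh : g * h ∈ D.K := by
        rw [D.mul_eq_of_notMem g hh]
        exact mul_mem (D.mul_s_mem hg) (inv_mem (D.mul_s_mem hh))
      simp only [Φ, if_neg hg, if_neg hh, if_pos hgh]
      rw [D.mul_eq_of_notMem g hh, hψ'_mul (D.mul_s_mem hg) (inv_mem (D.mul_s_mem hh)),
        hψ'_inv (D.mul_s_mem hh), mul_assoc, ← mul_assoc e, hswap (D.mul_s_mem hh), mul_assoc,
        he, mul_one]
  refine ⟨MonoidHom.mk' Φ Φ_mul, fun k => by simp [Φ, hψ' k.2], ?_⟩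
  simp only [MonoidHom.mk'_apply, Φ, if_neg D.s_notMem, D.s_mul_self, hψ' (one_mem D.K)]
  show ψ 1 * e = e
  rw [map_one, one_mul]

theorem exists_section [IsCyclic D.K] (hodd : Odd (Nat.card D.K)) {π : E →* G}
    (hπ : IsDivisibleCentralExtension π) : ∃ σ : G →* E, π.comp σ = .id G := by
  have : Finite D.K := Nat.finite_of_card_ne_zero hodd.pos.ne'
  obtain ⟨ψ₀, hψ₀⟩ := exists_monoidHom_lift_of_isCyclic D.K.subtype fun _ hx =>
    hπ.exists_lift_pow_eq_one Nat.card_pos.ne' hx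
  obtain ⟨e, he, he2⟩ := hπ.exists_lift_pow_eq_one two_ne_zero (x := D.s) (by rw [sq, D.s_mul_self])
  obtain ⟨ψ, hψ, hψe⟩ := exists_lift_conj_eq_inv hπ.ker_le_center hodd hψ₀ (e := e)
    fun k => by simp [he, D.conj_eq_inv k k.2]
  obtain ⟨Φ, hΦK, hΦs⟩ := D.exists_monoidHom_extend ψ (by rwa [← sq]) hψe
  have hK (k : D.K) : π (Φ k) = k := by rw [hΦK]; exact DFunLike.congr_fun hψ k
  refine ⟨Φ, MonoidHom.ext fun g => ?_⟩
  rcases D.mem_or_mul_mem g with hg | hg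
  · exact hK ⟨g, hg⟩
  · calc π (Φ g) = π (Φ (g * D.s)) * π (Φ D.s) := by
          rw [← map_mul, ← map_mul, mul_assoc, D.s_mul_self, mul_one]
      _ = g := by rw [hK ⟨_, hg⟩, hΦs, he, mul_assoc, D.s_mul_self, mul_one]

end DihedralDecomposition

namespace TrivialCochains

variable {G A B : Type*} [Group G] [AddCommGroup A] [AddCommGroup B]

-- Inhomogeneous differentials with trivial coefficients, with the signs of
-- `inhomogeneousCochains.d`.
def d₁ (u : G → A) (g h : G) : A := u h - u (g * h) + u g

def d₂ (v : G → G → A) (g h k : G) : A := v h k - v (g * h) k + v g (h * k) - v g h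

def d₃ (f : G → G → G → A) (a b c d : G) : A :=
  f b c d - f (a * b) c d + f a (b * c) d - f a b (c * d) + f a b c

theorem d₂_d₁ (u : G → A) : d₂ (d₁ u) = 0 := by
  funext g h k
  simp only [d₁, d₂, mul_assoc, Pi.zero_apply]
  abel

theorem map_d₂ (φ : A →+ B) (v : G → G → A) (g h k : G) :
    φ (d₂ v g h k) = d₂ (fun g h => φ (v g h)) g h k := by
  simp [d₂]

theorem map_d₃ (φ : A →+ B) (f : G → G → G → A) (a b c d : G) :
    φ (d₃ f a b c d) = d₃ (fun a b c => φ (f a b c)) a b c d := by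
  simp [d₃]

structure TwoCocycle (G A : Type*) [Group G] [AddCommGroup A] where
  toFun : G → G → A
  d₂_eq_zero : d₂ toFun = 0

/-- `H²(G, A) = 0` for the trivial action of `G` on `A`. -/
def TwoCocyclesAreCoboundaries (G A : Type*) [Group G] [AddCommGroup A] : Prop :=
  ∀ w : TwoCocycle G A, ∃ u : G → A, d₁ u = w.toFun

namespace TwoCocycle

instance : CoeFun (TwoCocycle G A) fun _ => G → G → A := ⟨toFun⟩

variable (w : TwoCocycle G A)

theorem add_apply_mul (g h k : G) : w h k + w g (h * k) = w (g * h) k + w g h := by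
  have := congrFun (congrFun (congrFun w.d₂_eq_zero g) h) k
  rw [d₂, Pi.zero_apply, Pi.zero_apply, Pi.zero_apply] at this
  rw [← sub_eq_zero, ← this]
  abel

theorem apply_one_left (g : G) : w 1 g = w 1 1 := by
  simpa using w.add_apply_mul 1 1 g

theorem apply_one_right (g : G) : w g 1 = w 1 1 := by
  simpa using (w.add_apply_mul g 1 1).symm

@[ext]
structure Extension (w : TwoCocycle G A) where
  fst : A
  snd : G

namespace Extension

instance : Mul w.Extension := ⟨fun x y => ⟨x.fst + y.fst + w x.snd y.snd, x.snd * y.snd⟩⟩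
-- `w` need not be normalized: the identity is `⟨-w 1 1, 1⟩`, not `⟨0, 1⟩`.
instance : One w.Extension := ⟨⟨-w 1 1, 1⟩⟩
instance : Inv w.Extension := ⟨fun x => ⟨-x.fst - w x.snd⁻¹ x.snd - w 1 1, x.snd⁻¹⟩⟩

@[simp] theorem mul_fst (x y : w.Extension) : (x * y).fst = x.fst + y.fst + w x.snd y.snd := rfl
@[simp] theorem mul_snd (x y : w.Extension) : (x * y).snd = x.snd * y.snd := rfl
@[simp] theorem one_fst : (1 : w.Extension).fst = -w 1 1 := rfl
@[simp] theorem one_snd : (1 : w.Extension).snd = 1 := rfl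
@[simp] theorem inv_fst (x : w.Extension) : x⁻¹.fst = -x.fst - w x.snd⁻¹ x.snd - w 1 1 := rfl
@[simp] theorem inv_snd (x : w.Extension) : x⁻¹.snd = x.snd⁻¹ := rfl

instance : Group w.Extension :=
  Group.ofLeftAxioms
    (fun x y z => Extension.ext
      (by
        simp only [mul_fst, mul_snd]
        linear_combination (norm := abel) -w.add_apply_mul x.snd y.snd z.snd)
      (mul_assoc ..))
    (fun x => Extension.ext (by simp [w.apply_one_left]) (one_mul _))
    (fun x => Extension.ext (by simp only [mul_fst, inv_fst, inv_snd, one_fst]; abel)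
      (inv_mul_cancel _))

def proj : w.Extension →* G where
  toFun x := x.snd
  map_one' := rfl
  map_mul' _ _ := rfl

@[simp] theorem proj_apply (x : w.Extension) : proj w x = x.snd := rfl

theorem pow_mk_one (b : A) (k : ℕ) :
    (⟨b - w 1 1, 1⟩ : w.Extension) ^ k = ⟨k • b - w 1 1, 1⟩ := by
  induction k with
  | zero => ext <;> simp
  | succ k ih =>
    ext
    · simp only [pow_succ, ih, mul_fst, add_nsmul, one_smul]
      abel
    · simp only [pow_succ, ih, mul_snd, mul_one]

end Extension

open Extension

theorem isDivisibleCentralExtension [DivisibleBy A ℤ] : IsDivisibleCentralExtension (proj w) where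
  surjective x := ⟨⟨0, x⟩, rfl⟩
  ker_le_center z hz := Subgroup.mem_center_iff.mpr fun y => by
    rw [MonoidHom.mem_ker, proj_apply] at hz
    ext
    · simp only [mul_fst, hz, w.apply_one_right, w.apply_one_left]
      abel
    · simp only [mul_snd, hz, mul_one, one_mul]
  exists_pow_eq z hz k hk := by
    rw [MonoidHom.mem_ker, proj_apply] at hz
    refine ⟨⟨DivisibleBy.div (z.fst + w 1 1) (k : ℤ) - w 1 1, 1⟩, rfl, ?_⟩
    rw [pow_mk_one, ← natCast_zsmul, DivisibleBy.div_cancel _ (by exact_mod_cast hk)]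
    ext <;> simp [hz]

theorem exists_d₁_eq_of_section (σ : G →* w.Extension) (hσ : (proj w).comp σ = .id G) :
    ∃ u : G → A, d₁ u = w := by
  have hσ_snd (g : G) : (σ g).snd = g := DFunLike.congr_fun hσ g
  refine ⟨fun g => -(σ g).fst, funext fun g => funext fun h => ?_⟩
  have := congrArg Extension.fst (map_mul σ g h)
  simp only [mul_fst, hσ_snd] at this
  simp only [d₁, this]
  abel

end TwoCocycle

theorem TwoCocyclesAreCoboundaries.of_isCyclic [Finite G] [IsCyclic G] [DivisibleBy A ℤ] :
    TwoCocyclesAreCoboundaries G A := fun w => by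
  have hπ := w.isDivisibleCentralExtension
  obtain ⟨σ, hσ⟩ := exists_monoidHom_lift_of_isCyclic (.id G) fun _ hx =>
    hπ.exists_lift_pow_eq_one Nat.card_pos.ne' hx
  exact w.exists_d₁_eq_of_section σ hσ

theorem TwoCocyclesAreCoboundaries.of_dihedralDecomposition [DivisibleBy A ℤ]
    (D : DihedralDecomposition G) [IsCyclic D.K] (hodd : Odd (Nat.card D.K)) :
    TwoCocyclesAreCoboundaries G A := fun w => by
  obtain ⟨σ, hσ⟩ := D.exists_section hodd w.isDivisibleCentralExtension
  exact w.exists_d₁_eq_of_section σ hσ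

theorem d₂_sum_eq_neg_card_smul [Fintype G] {f : G → G → G → A} (hf : d₃ f = 0) (g h k : G) :
    d₂ (fun g h => ∑ x, f g h x) g h k = -(Fintype.card G • f g h k) := by
  have hshift : ∑ x, f g h (k * x) = ∑ x, f g h x :=
    Fintype.sum_equiv (Equiv.mulLeft k) _ _ fun _ => rfl
  have hsum : ∑ x, d₃ f g h k x = 0 := by simp [hf]
  simp only [d₃, Finset.sum_add_distrib, Finset.sum_sub_distrib, hshift, Finset.sum_const,
    Finset.card_univ] at hsum
  rw [d₂, eq_neg_iff_add_eq_zero, ← hsum]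

theorem exists_d₂_eq_of_d₃_eq_zero [Finite G] [Module ℚ A] {f : G → G → G → A}
    (hf : d₃ f = 0) : ∃ v : G → G → A, d₂ v = f := by
  have := Fintype.ofFinite G
  have hcard : (Fintype.card G : ℚ) ≠ 0 := Nat.cast_ne_zero.mpr Fintype.card_ne_zero
  refine ⟨fun g h => -(Fintype.card G : ℚ)⁻¹ • ∑ x, f g h x, funext₃ fun g h k => ?_⟩
  have := d₂_sum_eq_neg_card_smul hf g h k
  simp only [d₂] at this ⊢
  rw [← smul_sub, ← smul_add, ← smul_sub, this, neg_smul, smul_neg, neg_neg,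
    ← Nat.cast_smul_eq_nsmul ℚ, smul_smul, inv_mul_cancel₀ hcard, one_smul]

theorem exists_int_d₂_eq_of_d₃_eq_zero [Finite G]
    (hG : TwoCocyclesAreCoboundaries G (AddCircle (1 : ℝ))) {f : G → G → G → ℤ}
    (hf : d₃ f = 0) : ∃ U : G → G → ℤ, d₂ U = f := by
  let q : ℝ →+ AddCircle (1 : ℝ) := QuotientAddGroup.mk' _
  have hq (x : ℝ) : q x = 0 ↔ ∃ n : ℤ, (n : ℝ) = x := by
    simp [q, AddSubgroup.mem_zmultiples_iff]
  obtain ⟨v, hv⟩ := exists_d₂_eq_of_d₃_eq_zero (A := ℝ) (f := fun a b c => (f a b c : ℝ)) (by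
    funext a b c d
    simpa [hf] using (map_d₃ (Int.castAddHom ℝ) f a b c d).symm)
  obtain ⟨u, hu⟩ := hG ⟨fun g h => q (v g h), funext₃ fun g h k => by
    rw [← map_d₂, hv]
    exact (hq _).mpr ⟨_, rfl⟩⟩
  obtain ⟨ũ, hũ⟩ : ∃ ũ : G → ℝ, ∀ g, q (ũ g) = u g :=
    ⟨fun g => Function.surjInv (QuotientAddGroup.mk'_surjective _) (u g),
      fun g => Function.surjInv_eq (QuotientAddGroup.mk'_surjective _) (u g)⟩
  choose U hU using fun g h => (hq (v g h - d₁ ũ g h)).mp (by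
    rw [map_sub, show q (v g h) = d₁ u g h from (congrFun (congrFun hu g) h).symm]
    simp [d₁, hũ])
  refine ⟨U, funext₃ fun g h k => Int.cast_injective (α := ℝ) ?_⟩
  calc ((d₂ U g h k : ℤ) : ℝ) = d₂ (fun g h => (U g h : ℝ)) g h k := by
        simpa using map_d₂ (Int.castAddHom ℝ) U g h k
    _ = d₂ v g h k - d₂ (d₁ ũ) g h k := by simp only [hU, d₂]; abel
    _ = f g h k := by rw [hv, d₂_d₁]; simp

section Complex

universe u

variable {k G M : Type u} [CommRing k] [Group G] [AddCommGroup M] [Module k M]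

theorem inhomogeneousCochains_d_two_apply (v : (Fin 2 → G) → M) (g : Fin 3 → G) :
    inhomogeneousCochains.d (Rep.trivial k G M) 2 v g
      = d₂ (fun a b => v ![a, b]) (g 0) (g 1) (g 2) := by
  have h0 : Fin.contractNth 0 (· * ·) g = ![g 0 * g 1, g 2] := by ext i; fin_cases i <;> rfl
  have h1 : Fin.contractNth 1 (· * ·) g = ![g 0, g 1 * g 2] := by ext i; fin_cases i <;> rfl
  have h2 : Fin.contractNth 2 (· * ·) g = ![g 0, g 1] := by ext i; fin_cases i <;> rfl
  have hs : (fun i : Fin 2 => g i.succ) = ![g 1, g 2] := by ext i; fin_cases i <;> rfl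
  simp [inhomogeneousCochains.d_hom_apply, Fin.sum_univ_three, d₂, h0, h1, h2, hs, pow_succ]
  abel

theorem inhomogeneousCochains_d_three_apply (v : (Fin 3 → G) → M) (g : Fin 4 → G) :
    inhomogeneousCochains.d (Rep.trivial k G M) 3 v g
      = d₃ (fun a b c => v ![a, b, c]) (g 0) (g 1) (g 2) (g 3) := by
  have h0 : Fin.contractNth 0 (· * ·) g = ![g 0 * g 1, g 2, g 3] := by
    ext i; fin_cases i <;> rfl
  have h1 : Fin.contractNth 1 (· * ·) g = ![g 0, g 1 * g 2, g 3] := by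
    ext i; fin_cases i <;> rfl
  have h2 : Fin.contractNth 2 (· * ·) g = ![g 0, g 1, g 2 * g 3] := by
    ext i; fin_cases i <;> rfl
  have h3 : Fin.contractNth 3 (· * ·) g = ![g 0, g 1, g 2] := by ext i; fin_cases i <;> rfl
  have hs : (fun i : Fin 3 => g i.succ) = ![g 1, g 2, g 3] := by ext i; fin_cases i <;> rfl
  simp [inhomogeneousCochains.d_hom_apply, Fin.sum_univ_four, d₃, h0, h1, h2, h3, hs, pow_succ]
  abel

end Complex

end TrivialCochains

open TrivialCochains

theorem isZero_groupCohomology_three {G : Type} [Group G] [Finite G]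
    (hG : TwoCocyclesAreCoboundaries G (AddCircle (1 : ℝ))) :
    Limits.IsZero (groupCohomology (Rep.trivial ℤ G ℤ) 3) := by
  refine ((inhomogeneousCochains _).exactAt_iff_isZero_homology 3).mp ?_
  rw [HomologicalComplex.exactAt_iff' _ 2 3 4 (by simp) (by simp),
    ShortComplex.moduleCat_exact_iff]
  intro (f : (Fin 3 → G) → ℤ) hf
  change inhomogeneousCochains.d (Rep.trivial ℤ G ℤ) 3 f = 0 at hf
  obtain ⟨U, hU⟩ := exists_int_d₂_eq_of_d₃_eq_zero hG (f := fun a b c => f ![a, b, c]) (by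
    funext a b c d
    have := congrFun hf ![a, b, c, d]
    rwa [inhomogeneousCochains_d_three_apply] at this)
  refine ⟨fun x => U (x 0) (x 1), ?_⟩
  change inhomogeneousCochains.d (Rep.trivial ℤ G ℤ) 2 _ = f
  funext g
  have hg : ![g 0, g 1, g 2] = g := by ext i; fin_cases i <;> rfl
  rw [inhomogeneousCochains_d_two_apply, ← hg]
  exact congrFun (congrFun (congrFun hU (g 0)) (g 1)) (g 2)

theorem exists_le_mulEquiv_kleinFour {M : Type*} [Group M] {S : Subgroup M} {x y : M}
    (hxS : x ∈ S) (hyS : y ∈ S) (hx : x * x = 1) (hy : y * y = 1) (hx1 : x ≠ 1) (hy1 : y ≠ 1)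
    (hxy : x ≠ y) (hc : Commute x y) :
    ∃ V : Subgroup M, V ≤ S ∧
      Nonempty (V ≃* (Multiplicative (ZMod 2) × Multiplicative (ZMod 2))) := by
  obtain ⟨f₁, hf₁⟩ := exists_monoidHom_zmod_apply_one (n := 2) (e := x) (by rw [sq, hx])
  obtain ⟨f₂, hf₂⟩ := exists_monoidHom_zmod_apply_one (n := 2) (e := y) (by rw [sq, hy])
  have hC₂ (z : Multiplicative (ZMod 2)) : z = 1 ∨ z = .ofAdd 1 := by revert z; decide
  have hcomm (a b) : Commute (f₁ a) (f₂ b) := by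
    rcases hC₂ a with rfl | rfl <;> rcases hC₂ b with rfl | rfl <;> simp [hf₁, hf₂, hc]
  let f := f₁.noncommCoprod f₂ hcomm
  have hf : Function.Injective f := by
    rw [injective_iff_map_eq_one]
    rintro ⟨a, b⟩ hab
    rcases hC₂ a with rfl | rfl <;> rcases hC₂ b with rfl | rfl <;>
      simp only [f, MonoidHom.noncommCoprod_apply, hf₁, hf₂, map_one, mul_one, one_mul] at hab
    · rfl
    · exact absurd hab hy1
    · exact absurd hab hx1
    · exact absurd (mul_eq_one_iff_eq_inv.mp hab) (by rwa [inv_eq_of_mul_eq_one_right hy])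
  refine ⟨f.range, ?_, ⟨(MonoidHom.ofInjective hf).symm⟩⟩
  rintro _ ⟨⟨a, b⟩, rfl⟩
  rcases hC₂ a with rfl | rfl <;> rcases hC₂ b with rfl | rfl <;>
    simp [f, hf₁, hf₂, hxS, hyS, mul_mem hxS hyS]

namespace DihedralGroup
variable {n : ℕ}

theorem mem_zpowers_r_one {x : DihedralGroup n} : x ∈ Subgroup.zpowers (r 1) ↔ ∃ i, x = r i := by
  rw [Subgroup.mem_zpowers_iff]
  refine ⟨fun ⟨k, hk⟩ => ⟨k, by rw [← hk, r_one_zpow]⟩, ?_⟩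
  rintro ⟨i, rfl⟩
  exact ⟨(i.cast : ℤ), by rw [r_one_zpow, ZMod.intCast_zmod_cast]⟩

theorem exists_eq_sr_of_notMem {x : DihedralGroup n} (hx : x ∉ Subgroup.zpowers (r 1)) :
    ∃ i, x = sr i := by
  cases x with
  | r i => exact absurd (mem_zpowers_r_one.mpr ⟨i, rfl⟩) hx
  | sr i => exact ⟨i, rfl⟩


theorem odd_card_subgroupOf_zpowers_r_one {H : Subgroup (DihedralGroup n)} [NeZero n]
    (hH : ¬ ∃ V : Subgroup (DihedralGroup n), V ≤ H ∧
      Nonempty (V ≃* (Multiplicative (ZMod 2) × Multiplicative (ZMod 2))))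
    {j : ZMod n} (hj : sr j ∈ H) : Odd (Nat.card ((Subgroup.zpowers (r 1)).subgroupOf H)) := by
  by_contra heven
  obtain ⟨ρ, hρ⟩ := exists_prime_orderOf_dvd_card' 2
    (even_iff_two_dvd.mp (Nat.not_odd_iff_even.mp heven))
  obtain ⟨a, ha⟩ : ∃ a, ((ρ : H) : DihedralGroup n) = r a := mem_zpowers_r_one.mp ρ.2
  have hρ2 : ((ρ : H) : DihedralGroup n) ^ 2 = 1 := by
    rw [← Subgroup.coe_pow, ← Subgroup.coe_pow, ← hρ, pow_orderOf_eq_one]; rfl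
  have hρ1 : ((ρ : H) : DihedralGroup n) ≠ 1 := fun h1 => by
    have : ρ = 1 := Subtype.ext (Subtype.ext h1)
    simp [this] at hρ
  rw [ha] at hρ2 hρ1
  have haa : a + a = 0 := r.inj (by rw [← r_mul_r, ← sq, hρ2]; rfl)
  refine hH (exists_le_mulEquiv_kleinFour (ha ▸ (ρ : H).2) hj (by rwa [← sq])
    (sr_mul_self j) hρ1 (by rw [one_def]; rintro ⟨⟩) (by rintro ⟨⟩) ?_)
  simp only [Commute, SemiconjBy, r_mul_sr, sr_mul_r, sub_eq_add_neg,
    neg_eq_of_add_eq_zero_left haa]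

theorem isCyclic_or_exists_dihedralDecomposition [NeZero n] {H : Subgroup (DihedralGroup n)}
    (hH : ¬ ∃ V : Subgroup (DihedralGroup n), V ≤ H ∧
      Nonempty (V ≃* (Multiplicative (ZMod 2) × Multiplicative (ZMod 2)))) :
    IsCyclic H ∨ ∃ D : DihedralDecomposition H, IsCyclic D.K ∧ Odd (Nat.card D.K) := by
  set R := Subgroup.zpowers (r 1 : DihedralGroup n)
  by_cases hHR : H ≤ R
  · exact .inl (isCyclic_of_injective _ (Subgroup.inclusion_injective hHR))
  obtain ⟨_, hsH, hsR⟩ := Set.not_subset.mp hHR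
  obtain ⟨j, rfl⟩ := exists_eq_sr_of_notMem hsR
  let K := R.subgroupOf H
  have hK : IsCyclic K :=
    isCyclic_of_injective ((H.subtype.comp K.subtype).codRestrict R fun k => k.2)
      fun a b hab => by have := congrArg Subtype.val hab; ext; exact this
  refine .inr ⟨⟨K, ⟨sr j, hsH⟩, Subtype.ext (sr_mul_self j), hsR, fun k hk => ?_, fun g => ?_⟩,
    hK, odd_card_subgroupOf_zpowers_r_one hH hsH⟩
  · obtain ⟨i, hi⟩ : ∃ i, (k : DihedralGroup n) = r i := mem_zpowers_r_one.mp hk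
    ext
    simp only [Subgroup.coe_mul, Subgroup.coe_inv, hi, inv_sr, inv_r, sr_mul_r, sr_mul_sr]
    congr 1
    ring
  · by_cases hg : (g : DihedralGroup n) ∈ R
    · exact .inl hg
    · obtain ⟨i, hi⟩ := exists_eq_sr_of_notMem hg
      exact .inr (mem_zpowers_r_one.mpr ⟨j - i, by simp [Subgroup.coe_mul, hi, sr_mul_sr]⟩)

end DihedralGroup

/-- For `n` a positive integer, `G = Dₙ` the dihedral group of order `2n`, and
`H ≤ G` a subgroup containing no Klein four-subgroup of `G` (no subgroup of `G` contained in
`H` is isomorphic to `ℤ/2ℤ × ℤ/2ℤ`), the restriction map `Res : H³(G, ℤ) → H³(H, ℤ)` is the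
zero map (`ℤ` a trivial module). -/
theorem dihedral_res_zero_of_no_klein_subgroup (n : ℕ) (hn : 0 < n)
    (H : Subgroup (DihedralGroup n))
    (hK : ¬ ∃ K : Subgroup (DihedralGroup n), K ≤ H ∧
      Nonempty (K ≃* (Multiplicative (ZMod 2) × Multiplicative (ZMod 2)))) :
    ∀ x : groupCohomology (Rep.trivial ℤ (DihedralGroup n) ℤ) 3,
      trivialCohMap ℤ H.subtype ℤ 3 x = 0 := by
  have : NeZero n := ⟨hn.ne'⟩
  have hH : TwoCocyclesAreCoboundaries H (AddCircle (1 : ℝ)) := by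
    rcases DihedralGroup.isCyclic_or_exists_dihedralDecomposition hK with hH | ⟨D, hD, hodd⟩
    · exact .of_isCyclic
    · exact .of_dihedralDecomposition D hodd
  have := ModuleCat.isZero_iff_subsingleton.mp (isZero_groupCohomology_three hH)
  exact fun x => Subsingleton.elim _ _
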